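/- Let m be a natural number, s_0,…,s_m ∈ ℂ support points, w = (w_0,…,w_m) ∈ ℂ^{m+1}, and ν a natural number with 1 ≤ ν ≤ m. Let φ_0,…,φ_{ν−1} ∈ ℂ[X] be a basis of the ℂ-vector space of polynomials of degree < ν. If w is nonzero and ∑_{k=0}^m w_k · φ_i(s_k) = 0 for every i = 0,…,ν−1, then the denominator polynomial q = ∑_{k=0}^m w_k · ∏_{j≠k} (X − s_j) has degree at most m − ν. -/

import Mathlib

/-!
Writing `L_k` for the nodal polynomial of the support points other than `s_k`, the geometric sum
`g_k = ∑_{i<ν} X^i s_k^(ν-1-i)` satisfies `g_k (X - s_k) = X^ν - s_k^ν`, hence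
`X^ν L_k = s_k^ν L_k + g_k ℓ` with `ℓ` the full nodal polynomial. Weighting by `w_k` and summing,
the coefficients of `∑_k w_k g_k` are the moments `∑_k w_k s_k^t` with `t < ν`, which vanish
because `X^t` lies in the span of the `φ_i`. So `X^ν q = ∑_k w_k s_k^ν L_k` has degree at most `m`.
-/

open Polynomial Finset Lagrange

variable {R : Type*} [CommRing R] {ι : Type*}

theorem sum_mul_eval_eq_zero_of_mem_degreeLT {S : Finset ι} {s w : ι → R} {n : ℕ}
    (b : Module.Basis (Fin n) R (degreeLT R n))
    (hb : ∀ i, ∑ k ∈ S, w k * (b i : R[X]).eval (s k) = 0)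
    {p : R[X]} (hp : p ∈ degreeLT R n) : ∑ k ∈ S, w k * p.eval (s k) = 0 := by
  let Λ : degreeLT R n →ₗ[R] R :=
    (∑ k ∈ S, w k • leval (s k)).comp (degreeLT R n).subtype
  have hΛ : ∀ r, Λ r = ∑ k ∈ S, w k * (r : R[X]).eval (s k) := fun r => by
    simp [Λ]
  have hΛ0 : Λ = 0 := b.ext fun i => by rw [hΛ, hb, LinearMap.zero_apply]
  simpa [hΛ] using LinearMap.congr_fun hΛ0 ⟨p, hp⟩

theorem X_pow_mul_nodal_erase [DecidableEq ι] {S : Finset ι} (s : ι → R) {k : ι} (hk : k ∈ S)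
    (n : ℕ) :
    X ^ n * nodal (S.erase k) s = C (s k ^ n) * nodal (S.erase k) s
      + (∑ i ∈ range n, X ^ i * C (s k) ^ (n - 1 - i)) * nodal S s := by
  rw [nodal_eq_mul_nodal_erase hk, ← mul_assoc, geom_sum₂_mul, C_pow]
  ring

theorem sum_C_mul_geom_sum₂_eq_zero {S : Finset ι} {s w : ι → R} {n : ℕ}
    (hmom : ∀ t < n, ∑ k ∈ S, w k * s k ^ t = 0) :
    ∑ k ∈ S, C (w k) * ∑ i ∈ range n, X ^ i * C (s k) ^ (n - 1 - i) = 0 := by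
  simp_rw [mul_sum]
  rw [sum_comm]
  refine sum_eq_zero fun i hi => ?_
  have hmoment := hmom (n - 1 - i) (by have := mem_range.mp hi; omega)
  calc ∑ k ∈ S, C (w k) * (X ^ i * C (s k) ^ (n - 1 - i))
      = X ^ i * C (∑ k ∈ S, w k * s k ^ (n - 1 - i)) := by
        simp_rw [map_sum, mul_sum, map_mul, map_pow]
        exact sum_congr rfl fun k _ => by ring
    _ = 0 := by rw [hmoment, map_zero, mul_zero]

theorem X_pow_mul_sum_C_mul_nodal_erase [DecidableEq ι] {S : Finset ι} {s w : ι → R} {n : ℕ}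
    (hmom : ∀ t < n, ∑ k ∈ S, w k * s k ^ t = 0) :
    X ^ n * ∑ k ∈ S, C (w k) * nodal (S.erase k) s
      = ∑ k ∈ S, C (w k * s k ^ n) * nodal (S.erase k) s := by
  calc X ^ n * ∑ k ∈ S, C (w k) * nodal (S.erase k) s
      = ∑ k ∈ S, (C (w k * s k ^ n) * nodal (S.erase k) s
          + C (w k) * (∑ i ∈ range n, X ^ i * C (s k) ^ (n - 1 - i)) * nodal S s) := by
        rw [mul_sum]
        refine sum_congr rfl fun k hk => ?_
        rw [mul_left_comm, X_pow_mul_nodal_erase s hk, C_mul]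
        ring
    _ = ∑ k ∈ S, C (w k * s k ^ n) * nodal (S.erase k) s := by
        rw [sum_add_distrib, ← sum_mul, sum_C_mul_geom_sum₂_eq_zero hmom, zero_mul, add_zero]

theorem natDegree_sum_C_mul_nodal_erase_le [Nontrivial R] [DecidableEq ι] (S : Finset ι)
    (s c : ι → R) : (∑ k ∈ S, C (c k) * nodal (S.erase k) s).natDegree ≤ #S - 1 :=
  natDegree_sum_le_of_forall_le _ _ fun k hk =>
    (natDegree_C_mul_le _ _).trans (by rw [natDegree_nodal, card_erase_of_mem hk])

theorem denominator_degree_le_of_vandermonde_general (m : ℕ) (s w : ℕ → ℂ) (ν : ℕ)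
    (φ : Fin ν → Polynomial ℂ)
    (b : Module.Basis (Fin ν) ℂ (Polynomial.degreeLT ℂ ν))
    (hφ : ∀ i : Fin ν, (b i : Polynomial ℂ) = φ i)
    (hnull : ∀ i : Fin ν, ∑ k ∈ Finset.range (m + 1), w k * (φ i).eval (s k) = 0)
    (q : Polynomial ℂ)
    (hq : q = ∑ k ∈ Finset.range (m + 1),
      C (w k) * ∏ j ∈ (Finset.range (m + 1)).erase k, (X - C (s j))) :
    q.degree ≤ (m - ν : ℕ) := by
  have hbasis : ∀ i, ∑ k ∈ range (m + 1), w k * (b i : ℂ[X]).eval (s k) = 0 := fun i => by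
    rw [hφ]
    exact hnull i
  have hmom : ∀ t < ν, ∑ k ∈ range (m + 1), w k * s k ^ t = 0 := fun t ht => by
    simpa using sum_mul_eval_eq_zero_of_mem_degreeLT b hbasis
      (mem_degreeLT.mpr ((degree_X_pow_le t).trans_lt (by exact_mod_cast ht)))
  have hq_nodal : q = ∑ k ∈ range (m + 1), C (w k) * nodal ((range (m + 1)).erase k) s := hq
  have hdeg : (X ^ ν * q).natDegree ≤ m := by
    rw [hq_nodal, X_pow_mul_sum_C_mul_nodal_erase hmom]
    exact (natDegree_sum_C_mul_nodal_erase_le (range (m + 1)) s fun k => w k * s k ^ ν).trans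
      (by simp)
  rcases eq_or_ne q 0 with rfl | hq0
  · simp
  · rw [natDegree_X_pow_mul (n := ν) hq0] at hdeg
    exact degree_le_of_natDegree_le (by omega)

/-- Denominator part of the paper's Corollary 3.3: if the weight vector lies in the
null space of the transpose of the generalized Vandermonde matrix built from a basis
of the polynomials of degree `< ν`, then the barycentric denominator polynomial has
degree at most `m - ν`. -/
theorem denominator_degree_le_of_vandermonde (m : ℕ) (s w : ℕ → ℂ) (ν : ℕ)
    (hν1 : 1 ≤ ν) (hνm : ν ≤ m)
    (φ : Fin ν → Polynomial ℂ)
    (b : Module.Basis (Fin ν) ℂ (Polynomial.degreeLT ℂ ν))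
    (hφ : ∀ i : Fin ν, (b i : Polynomial ℂ) = φ i)
    (hw : ∃ k ∈ Finset.range (m + 1), w k ≠ 0)
    (hnull : ∀ i : Fin ν, ∑ k ∈ Finset.range (m + 1), w k * (φ i).eval (s k) = 0)
    (q : Polynomial ℂ)
    (hq : q = ∑ k ∈ Finset.range (m + 1),
      C (w k) * ∏ j ∈ (Finset.range (m + 1)).erase k, (X - C (s j))) :
    q.degree ≤ (m - ν : ℕ) :=
  denominator_degree_le_of_vandermonde_general m s w ν φ b hφ hnull q hq
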